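/- arXiv:0912.0576 — 2 statements merged into one kernel-verified Lean document; each statement's English description precedes it below -/
import Mathlib

section
/- Let W be a vector space over ℚ and let V = ℝ ⊗_ℚ W be its extension of scalars to ℝ. Let J be a positive integer, let v, v₁, …, v_J be elements of W, and suppose there exist real numbers γ₁, …, γ_J, all strictly positive, such that 1 ⊗ v = Σ_{j=1}^J γ_j (1 ⊗ v_j) holds in V. Then there exist strictly positive rational numbers γ̂₁, …, γ̂_J such that v = Σ_{j=1}^J γ̂_j v_j holds in W. -/
/-!
Every ℚ-linear functional `φ : ℝ → ℚ` can be pushed through the identity in `ℝ ⊗[ℚ] W`,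
giving `φ 1 • v = ∑ φ (γ j) • vⱼ` in `W`. So it suffices to find such a `φ` that is positive
on the finitely many positive reals `1, γ₁, …, γ_J`. On their (finite-dimensional) `ℚ`-span,
write each element in a `ℚ`-basis `b` and pair its coordinates with real weights `μ`: at `μ = b`
this gives back the element itself, hence positive values; positivity is an open condition
in `μ`, so a nearby rational `μ` works, and a rational `μ` defines a `ℚ`-linear functional,
which extends from the span to `ℝ`.
-/

open TensorProduct

theorem TensorProduct.apply_smul_eq_sum_of_tmul_eq {R A W ι : Type*} [CommSemiring R]
    [AddCommMonoid A] [Module R A] [AddCommMonoid W] [Module R W] (φ : A →ₗ[R] R)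
    {a : A} {v : W} {s : Finset ι} {c : ι → A} {w : ι → W}
    (h : a ⊗ₜ[R] v = ∑ i ∈ s, c i ⊗ₜ[R] w i) :
    φ a • v = ∑ i ∈ s, φ (c i) • w i := by
  simpa using congrArg (lift ((LinearMap.lsmul R W).comp φ)) h

theorem Submodule.exists_linearMap_rat_pos {E : Submodule ℚ ℝ} [FiniteDimensional ℚ E]
    {ι : Type*} [Finite ι] (x : ι → E) (hx : ∀ i, 0 < (x i : ℝ)) :
    ∃ ψ : E →ₗ[ℚ] ℚ, ∀ i, 0 < ψ (x i) := by
  let b := Module.finBasis ℚ E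
  let eval (μ : Fin (Module.finrank ℚ E) → ℝ) (y : E) : ℝ := ∑ t, μ t * b.repr y t
  have eval_basis (y : E) : eval (fun t => b t) y = y := by
    nth_rw 2 [← b.sum_repr y]
    simp only [eval, Submodule.coe_sum, Submodule.coe_smul, Rat.smul_def, mul_comm]
  let U := ⋂ i, {μ | 0 < eval μ (x i)}
  have hU : IsOpen U := isOpen_iInter_of_finite fun i =>
    isOpen_lt continuous_const (by fun_prop)
  have hbU : (fun t => (b t : ℝ)) ∈ U := Set.mem_iInter.2 fun i => by
    simpa only [Set.mem_ofPred_eq, eval_basis] using hx i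
  obtain ⟨q, hqU⟩ :=
    (DenseRange.piMap fun _ => Rat.denseRange_cast).exists_mem_open hU ⟨_, hbU⟩
  refine ⟨∑ t, q t • b.coord t, fun i => ?_⟩
  have hq := Set.mem_iInter.1 hqU i
  simp only [Set.mem_ofPred_eq, eval, Pi.map_apply] at hq
  simpa [mul_comm] using (by exact_mod_cast hq : (0 : ℚ) < ∑ t, q t * b.repr (x i) t)

theorem Real.exists_linearMap_rat_pos {s : Set ℝ} (hs : s.Finite) (hpos : ∀ x ∈ s, 0 < x) :
    ∃ φ : ℝ →ₗ[ℚ] ℚ, ∀ x ∈ s, 0 < φ x := by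
  have := hs.to_subtype
  have := FiniteDimensional.span_of_finite ℚ hs
  obtain ⟨ψ, hψ⟩ := (Submodule.span ℚ s).exists_linearMap_rat_pos
    (fun x : s => ⟨x, Submodule.subset_span x.2⟩) fun x => hpos x x.2
  obtain ⟨φ, rfl⟩ := LinearMap.exists_extend ψ
  exact ⟨φ, fun x hx => hψ ⟨x, hx⟩⟩

theorem rationality_of_coefficients_general
    (W : Type*) [AddCommGroup W] [Module ℚ W]
    (J : ℕ) (v : W) (vj : Fin J → W) (γ : Fin J → ℝ)
    (hpos : ∀ j, 0 < γ j)
    (h : (1 : ℝ) ⊗ₜ[ℚ] v = ∑ j, γ j • ((1 : ℝ) ⊗ₜ[ℚ] vj j)) :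
    ∃ γ' : Fin J → ℚ, (∀ j, 0 < γ' j) ∧ v = ∑ j, γ' j • vj j := by
  simp_rw [smul_tmul', smul_eq_mul, mul_one] at h
  obtain ⟨φ, hφ⟩ := Real.exists_linearMap_rat_pos ((Set.finite_range γ).insert 1)
    (by simpa using hpos)
  have hφ1 : 0 < φ 1 := hφ 1 (by simp)
  refine ⟨fun j => (φ 1)⁻¹ * φ (γ j), fun j => mul_pos (inv_pos.2 hφ1) (hφ _ (by simp)), ?_⟩
  rw [← inv_smul_smul₀ hφ1.ne' v, TensorProduct.apply_smul_eq_sum_of_tmul_eq φ h,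
    Finset.smul_sum]
  simp_rw [smul_smul]

/-- Rationality of coefficients: if a vector `v` of a `ℚ`-vector space `W` is, after
extension of scalars to `ℝ`, a linear combination of `1 ⊗ vⱼ` with strictly positive real
coefficients, then `v` is a linear combination of the `vⱼ` with strictly positive rational
coefficients. -/
theorem rationality_of_coefficients
    (W : Type*) [AddCommGroup W] [Module ℚ W]
    (J : ℕ) (hJ : 1 ≤ J) (v : W) (vj : Fin J → W) (γ : Fin J → ℝ)
    (hpos : ∀ j, 0 < γ j)
    (h : (1 : ℝ) ⊗ₜ[ℚ] v = ∑ j, γ j • ((1 : ℝ) ⊗ₜ[ℚ] vj j)) :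
    ∃ γ' : Fin J → ℚ, (∀ j, 0 < γ' j) ∧ v = ∑ j, γ' j • vj j :=
  rationality_of_coefficients_general W J v vj γ hpos h
end

section
/- Let n ≥ 2 be an integer and let (a_{λν})_{1≤λ,ν≤n} be any n×n matrix of complex numbers. Then Σ_{λ,ν=1}^n (−1)^{λ+ν}·a_{λν}·conj(a_{νλ}) = Σ_{λ,ν=1}^n |a_{λν}|² − Σ_{1≤λ<ν≤n} |(−1)^{n−ν}·a_{λν} + (−1)^{n−λ−1}·a_{νλ}|². -/
/-!
Split both double sums into a diagonal part and a sum over pairs `l < v`. The diagonal terms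
agree since `(-1) ^ (l + l) = 1`. On a pair, expanding `|ε x + δ y|²` produces the cross term
`ε δ (x ȳ + y x̄)`, and the signs of the paper satisfy `ε δ = -(-1) ^ (l + v)`, which turns that
cross term into exactly the two off-diagonal terms on the left.
-/

open Finset ComplexConjugate

theorem Finset.sum_sum_eq_sum_diag_add_sum_lt {α M : Type*} [Fintype α] [LinearOrder α]
    [AddCommMonoid M] (f : α → α → M) :
    ∑ i, ∑ j, f i j = ∑ i, f i i + ∑ i, ∑ j ∈ univ.filter (i < ·), (f i j + f j i) := by
  have hrow (i : α) : ∑ j, f i j =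
      f i i + ∑ j ∈ univ.filter (i < ·), f i j + ∑ j ∈ univ.filter (· < i), f i j := by
    rw [← sum_filter_add_sum_filter_not univ (i < ·), add_comm (f i i), add_assoc]
    congr 1
    have : univ.filter (fun j => ¬ i < j) = insert i (univ.filter (· < i)) := by
      ext j; simp [le_iff_lt_or_eq, eq_comm, or_comm]
    rw [this, sum_insert (by simp)]
  have hswap : ∑ i, ∑ j ∈ univ.filter (· < i), f i j = ∑ i, ∑ j ∈ univ.filter (i < ·), f j i :=
    sum_comm' (by simp)
  simp only [hrow, sum_add_distrib, hswap]
  abel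

theorem neg_one_pow_sub_add_sub {R : Type*} [Ring R] {n l v : ℕ} (hlv : l < v) (hvn : v < n) :
    (-1 : R) ^ (n - 1 - v + (n - 2 - l)) = -(-1) ^ (l + v) := by
  rw [← mul_neg_one ((-1 : R) ^ (l + v)), ← pow_succ, neg_one_pow_eq_pow_mod_two,
    neg_one_pow_eq_pow_mod_two (l + v + 1)]
  congr 1
  omega

theorem Complex.sq_norm_neg_one_pow_mul_add (s t : ℕ) (x y : ℂ) :
    (‖(-1) ^ s * x + (-1) ^ t * y‖ ^ 2 : ℂ) =
      ‖x‖ ^ 2 + ‖y‖ ^ 2 + (-1) ^ (s + t) * (x * conj y + y * conj x) := by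
  have hsq (k : ℕ) : (-1 : ℂ) ^ k * (-1) ^ k = 1 := by rw [← mul_pow]; simp
  simp only [← mul_conj', map_add, map_mul, map_pow, map_neg, map_one, pow_add]
  linear_combination (x * conj x) * hsq s + (y * conj y) * hsq t

-- Indices are `0`-based: the paper's `(-1)^{n-ν}` and `(-1)^{n-λ-1}` read `(-1)^(n-1-v)` and
-- `(-1)^(n-2-l)`.
theorem wedge_square_expansion_general
    (n : ℕ) (a : Fin n → Fin n → ℂ) :
    ∑ l : Fin n, ∑ v : Fin n,
        (-1 : ℂ) ^ ((l : ℕ) + (v : ℕ)) * a l v * (starRingEnd ℂ) (a v l) =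
      ((∑ l : Fin n, ∑ v : Fin n, ‖a l v‖ ^ 2 : ℝ) : ℂ) -
        ((∑ l : Fin n, ∑ v ∈ Finset.univ.filter (fun v => l < v),
          ‖(-1 : ℂ) ^ (n - 1 - (v : ℕ)) * a l v +
            (-1 : ℂ) ^ (n - 2 - (l : ℕ)) * a v l‖ ^ 2 : ℝ) : ℂ) := by
  push_cast
  rw [sum_sum_eq_sum_diag_add_sum_lt,
    sum_sum_eq_sum_diag_add_sum_lt (fun l v => (‖a l v‖ : ℂ) ^ 2), add_sub_assoc, ← sum_sub_distrib]
  congr 1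
  · refine sum_congr rfl fun l _ => ?_
    rw [← two_mul, pow_mul, neg_one_sq, one_pow, one_mul, Complex.mul_conj']
  · refine sum_congr rfl fun l _ => ?_
    rw [← sum_sub_distrib]
    refine sum_congr rfl fun v hv => ?_
    rw [Complex.sq_norm_neg_one_pow_mul_add,
      neg_one_pow_sub_add_sub (mem_filter.1 hv).2 v.isLt, add_comm (v : ℕ)]
    ring

/-- The component identity of §5.8: for any `n × n` complex matrix `a` (indices `0`-based,
so that the mathematical signs `(-1)^{λ+ν}`, `(-1)^{n-ν}`, `(-1)^{n-λ-1}` become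
`(-1)^{λ+ν}`, `(-1)^{n-1-ν}`, `(-1)^{n-2-λ}`),
`Σ_{λ,ν} (-1)^{λ+ν} a_{λν} conj(a_{νλ})
  = Σ_{λ,ν} |a_{λν}|² − Σ_{λ<ν} |(-1)^{n-ν} a_{λν} + (-1)^{n-λ-1} a_{νλ}|²`. -/
theorem wedge_square_expansion
    (n : ℕ) (hn : 2 ≤ n) (a : Fin n → Fin n → ℂ) :
    ∑ l : Fin n, ∑ v : Fin n,
        (-1 : ℂ) ^ ((l : ℕ) + (v : ℕ)) * a l v * (starRingEnd ℂ) (a v l) =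
      ((∑ l : Fin n, ∑ v : Fin n, ‖a l v‖ ^ 2 : ℝ) : ℂ) -
        ((∑ l : Fin n, ∑ v ∈ Finset.univ.filter (fun v => l < v),
          ‖(-1 : ℂ) ^ (n - 1 - (v : ℕ)) * a l v +
            (-1 : ℂ) ^ (n - 2 - (l : ℕ)) * a v l‖ ^ 2 : ℝ) : ℂ) :=
  wedge_square_expansion_general n a
end
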